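/- After an incremental update on the set E_i(v) of edges incoming to v, for every source s ∈ V: d'(s,v) = min{ d(s,v), min_{j : (u_j,v) ∈ E_i(v)} ( d(s,u_j) + w'(u_j,v) ) }. -/

import Mathlib

/-! Lowering weights only shortens paths, and a path to `u` followed by an updated edge `(u,v)`
costs `d(s,u) + w'(u,v)`; this gives `≤`. Conversely, cut any new path to `v` at its first
visit to `v`: the part before it avoids `v`, hence uses only unchanged edges and is an old path
to some `u`, and the edge `(u,v)` that follows is either updated, giving `d(s,u) + w'(u,v)`, or
unchanged, giving an old path to `v`. -/

open scoped ENNReal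

namespace BC

variable {V : Type*}

/-- `p` is a path from `s` to `t` in the weighted digraph with weight function `w`;
an edge is present iff its weight is not `⊤`. -/
def IsPath (w : V → V → ℝ≥0∞) (s t : V) (p : List V) : Prop :=
  p ≠ [] ∧ p.head? = some s ∧ p.getLast? = some t ∧ p.Chain' (fun a b => w a b ≠ ⊤)

/-- The weight of a path: the sum of the weights of its consecutive edges. -/
noncomputable def pWeight (w : V → V → ℝ≥0∞) (p : List V) : ℝ≥0∞ :=
  ((p.zip p.tail).map fun e => w e.1 e.2).sum

/-- The shortest-path distance `d(s,t)` (equal to `⊤` if no path exists). -/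
noncomputable def dist (w : V → V → ℝ≥0∞) (s t : V) : ℝ≥0∞ :=
  ⨅ p ∈ {p | IsPath w s t p}, pWeight w p

/-- `p` is a shortest path from `s` to `t`. -/
def IsShortest (w : V → V → ℝ≥0∞) (s t : V) (p : List V) : Prop :=
  IsPath w s t p ∧ pWeight w p = dist w s t

/-- `σ_{st}`: the number of shortest paths from `s` to `t`. -/
noncomputable def nsp (w : V → V → ℝ≥0∞) (s t : V) : ℕ :=
  Set.ncard {p | IsShortest w s t p}

/-- `σ_{st}(x)`: the number of shortest paths from `s` to `t` passing through `x`. -/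
noncomputable def nspVia (w : V → V → ℝ≥0∞) (s t x : V) : ℕ :=
  Set.ncard {p | IsShortest w s t p ∧ x ∈ p}

/-- The directed edge `(a,b)` lies on the path `p`. -/
def edgeOn (p : List V) (a b : V) : Prop := (a, b) ∈ p.zip p.tail

/-- The shortest-path DAG rooted at `s`: the edges lying on shortest paths from `s`. -/
def dagSet (w : V → V → ℝ≥0∞) (s : V) : Set (V × V) :=
  {e | w e.1 e.2 ≠ ⊤ ∧ dist w s e.1 ≠ ⊤ ∧ dist w s e.1 + w e.1 e.2 = dist w s e.2}

variable {w w' : V → V → ℝ≥0∞} {s t u v : V} {p l r : List V}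

@[simp] lemma pWeight_singleton (w : V → V → ℝ≥0∞) (a : V) : pWeight w [a] = 0 := rfl

@[simp] lemma pWeight_cons_cons (w : V → V → ℝ≥0∞) (a b : V) (l : List V) :
    pWeight w (a :: b :: l) = w a b + pWeight w (b :: l) := by
  simp [pWeight]

lemma pWeight_append_cons (w : V → V → ℝ≥0∞) (hl : l ≠ []) (b : V) (r : List V) :
    pWeight w (l ++ b :: r) = pWeight w l + w (l.getLast hl) b + pWeight w (b :: r) := by
  induction l with
  | nil => exact absurd rfl hl
  | cons a l ih =>
    rcases eq_or_ne l [] with rfl | hl'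
    · simp
    obtain ⟨c, l, rfl⟩ := List.exists_cons_of_ne_nil hl'
    simp only [List.cons_append, pWeight_cons_cons] at ih ⊢
    rw [ih hl', List.getLast_cons_cons, add_assoc, add_assoc, add_assoc]

lemma pWeight_concat (w : V → V → ℝ≥0∞) (hl : l ≠ []) (b : V) :
    pWeight w (l ++ [b]) = pWeight w l + w (l.getLast hl) b := by
  simpa using pWeight_append_cons w hl b []

lemma pWeight_mono (hle : w' ≤ w) (p : List V) : pWeight w' p ≤ pWeight w p :=
  List.sum_le_sum fun _ _ => hle _ _

lemma pWeight_congr (h : ∀ a ∈ p, ∀ b ∈ p, w a b = w' a b) : pWeight w p = pWeight w' p := by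
  refine congrArg List.sum (List.map_congr_left fun e he => ?_)
  have he' := List.of_mem_zip he
  exact h _ he'.1 _ (List.mem_of_mem_tail he'.2)

lemma isPath_singleton (w : V → V → ℝ≥0∞) (s : V) : IsPath w s s [s] :=
  ⟨List.cons_ne_nil _ _, rfl, rfl, .singleton s⟩

lemma IsPath.getLast_eq (hp : IsPath w s t p) : p.getLast hp.1 = t :=
  (List.getLast_eq_iff_getLast?_eq_some _).mpr hp.2.2.1

lemma IsPath.mono (hle : w' ≤ w) (hp : IsPath w s t p) : IsPath w' s t p :=
  ⟨hp.1, hp.2.1, hp.2.2.1, hp.2.2.2.imp fun {a b} hab => ((hle a b).trans_lt hab.lt_top).ne⟩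

lemma IsPath.congr (h : ∀ a ∈ p, ∀ b ∈ p, w a b = w' a b) (hp : IsPath w s t p) :
    IsPath w' s t p :=
  ⟨hp.1, hp.2.1, hp.2.2.1, hp.2.2.2.imp_of_mem_imp fun a b ha hb hab => h a ha b hb ▸ hab⟩

lemma IsPath.concat (hp : IsPath w s u p) (huv : w u v ≠ ⊤) : IsPath w s v (p ++ [v]) := by
  refine ⟨by simp, by rw [List.head?_append_of_ne_nil _ hp.1, hp.2.1], by simp,
    hp.2.2.2.append (.singleton v) fun x hx y hy => ?_⟩
  rw [Option.mem_def, hp.2.2.1, Option.some_inj] at hx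
  rw [List.head?_singleton, Option.mem_def, Option.some_inj] at hy
  rwa [← hx, ← hy]

lemma IsPath.of_append_cons {b : V} (hp : IsPath w s t (l ++ b :: r)) (hl : l ≠ []) :
    IsPath w s (l.getLast hl) l ∧ w (l.getLast hl) b ≠ ⊤ := by
  obtain ⟨-, hs, -, hc⟩ := hp
  obtain ⟨hcl, -, hlb⟩ := List.isChain_append.mp (List.isChain_split.mp hc).1
  refine ⟨⟨hl, by rwa [List.head?_append_of_ne_nil _ hl] at hs,
    List.getLast?_eq_some_getLast hl, hcl⟩, ?_⟩
  exact hlb _ (List.getLast?_eq_some_getLast hl) _ rfl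

lemma dist_le_pWeight (hp : IsPath w s t p) : dist w s t ≤ pWeight w p :=
  iInf₂_le p hp

lemma dist_mono (hle : w' ≤ w) (s t : V) : dist w' s t ≤ dist w s t :=
  le_iInf₂ fun p (hp : IsPath w s t p) => (dist_le_pWeight (hp.mono hle)).trans (pWeight_mono hle p)

lemma dist_le_dist_add (w : V → V → ℝ≥0∞) (s u v : V) : dist w s v ≤ dist w s u + w u v := by
  rcases eq_or_ne (w u v) ⊤ with huv | huv
  · simp [huv]
  simp only [dist, ENNReal.iInf_add]
  refine le_iInf₂ fun p (hp : IsPath w s u p) => ?_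
  calc dist w s v ≤ pWeight w (p ++ [v]) := dist_le_pWeight (IsPath.concat hp huv)
    _ = pWeight w p + w u v := by rw [pWeight_concat w hp.1, IsPath.getLast_eq hp]

lemma min_le_pWeight_of_update {U : Finset V}
    (hsame : ∀ a b : V, ¬(b = v ∧ a ∈ U) → w' a b = w a b) (hp : IsPath w' s v p) :
    min (dist w s v) (⨅ u ∈ U, dist w s u + w' u v) ≤ pWeight w' p := by
  obtain ⟨l, r, rfl, hvl⟩ := List.eq_append_cons_of_mem (List.mem_of_getLast? hp.2.2.1)
  rcases eq_or_ne l [] with rfl | hl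
  · obtain rfl : v = s := by simpa using hp.2.1
    exact (min_le_left _ _).trans ((dist_le_pWeight (isPath_singleton w v)).trans (by simp))
  set u := l.getLast hl
  have hagree : ∀ a ∈ l, ∀ b ∈ l, w' a b = w a b :=
    fun a _ b hb => hsame a b fun h => hvl (h.1 ▸ hb)
  have hlw : IsPath w s u l := (hp.of_append_cons hl).1.congr hagree
  have hmin : min (dist w s v) (⨅ u ∈ U, dist w s u + w' u v) ≤ dist w s u + w' u v := by
    by_cases hu : u ∈ U
    · exact (min_le_right _ _).trans (iInf₂_le u hu)
    · rw [hsame u v fun h => hu h.2]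
      exact (min_le_left _ _).trans (dist_le_dist_add w s u v)
  calc min (dist w s v) (⨅ u ∈ U, dist w s u + w' u v)
      ≤ dist w s u + w' u v := hmin
    _ ≤ pWeight w l + w' u v := by gcongr; exact dist_le_pWeight hlw
    _ = pWeight w' l + w' u v := by rw [pWeight_congr hagree]
    _ ≤ pWeight w' (l ++ v :: r) := by rw [pWeight_append_cons w' hl]; exact le_self_add

theorem vertex_update_dist_to_v_general
(w w' : V → V → ℝ≥0∞) (v : V) (U : Finset V)
    (hdec : ∀ u ∈ U, w' u v < w u v)
    (hsame : ∀ a b : V, ¬(b = v ∧ a ∈ U) → w' a b = w a b)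
    (s : V) :
    dist w' s v = min (dist w s v) (⨅ u ∈ U, dist w s u + w' u v) := by
  have hle : w' ≤ w := fun a b => by
    by_cases h : b = v ∧ a ∈ U
    · obtain ⟨rfl, hU⟩ := h
      exact (hdec a hU).le
    · exact (hsame a b h).le
  refine le_antisymm (le_min (dist_mono hle s v) (le_iInf₂ fun u _ => ?_)) ?_
  · exact (dist_le_dist_add w' s u v).trans (by gcongr; exact dist_mono hle s u)
  · exact le_iInf₂ fun p hp => min_le_pWeight_of_update hsame hp

/-- after an incremental update on the set `E_i(v) = {(u,v) : u ∈ U}` of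
edges incoming to `v` (each weight decreased, insertion being a decrease from `⊤`),
`d'(s,v) = min( d(s,v), min_{u ∈ U} ( d(s,u) + w'(u,v) ) )`. -/
theorem vertex_update_dist_to_v [Fintype V]
(w w' : V → V → ℝ≥0∞) (v : V) (U : Finset V)
    (hpos : ∀ a b, 0 < w a b) (hpos' : ∀ a b, 0 < w' a b)
    (hdec : ∀ u ∈ U, w' u v < w u v)
    (hsame : ∀ a b : V, ¬(b = v ∧ a ∈ U) → w' a b = w a b)
    (s : V) :
    dist w' s v = min (dist w s v) (⨅ u ∈ U, dist w s u + w' u v) :=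
  vertex_update_dist_to_v_general w w' v U hdec hsame s

end BC
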